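/- Let f be continuously differentiable, μ-strongly convex with L-Lipschitz gradient (0 < μ < L), let {x_k}, {y_k} be generated by the NAG method with s ∈ (0, 1/L), and define E_k := s(t_{k+1}-1)t_{k+1}(f(x_k) - f*) + (1/2)‖(t_{k+1}-1)(y_k - x_k) + (y_k - x*)‖². Then for all k ≥ 0: (i) for any a, b > 0, E_k ≤ (s(t_{k+1}-1)t_{k+1}(1+μ/a)/(2μ))‖∇f(y_k)‖² + ((1+1/b)/2)‖y_k - x*‖² + (((1+b)(t_{k+1}-1)² + s(t_{k+1}-1)t_{k+1}(a+L))/2)‖y_k - x_k‖²; and (ii) for any u, v, w > 0, E_{k+1} ≤ [ (t_{k+2}-1)t_{k+2}(1/(2μs) - 1 + Ls/2) + (1+u+1/v)t_{k+1}²/2 ]‖s∇f(y_k)‖² + ((1+v+w)(t_{k+1}-1)²/2)‖y_k - x_k‖² + ((1+1/w+1/u)/2)‖y_k - x*‖². -/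

import Mathlib

open Filter Finset
open scoped RealInnerProductSpace Topology

variable {E : Type*} [NormedAddCommGroup E] [InnerProductSpace ℝ E] [CompleteSpace E]

lemma slope1 {φ : ℝ → ℝ} {D : ℝ} (hφ : ConvexOn ℝ Set.univ φ) (hd : HasDerivAt φ D 0) :
    D ≤ φ 1 - φ 0 := by
  have := hφ.le_slope_of_hasDerivAt (Set.mem_univ 0) (Set.mem_univ 1) one_pos hd
  simpa [slope] using this

lemma line_convex {g : E → ℝ} (hg : ConvexOn ℝ Set.univ g) (p d : E) :
    ConvexOn ℝ Set.univ (fun τ : ℝ => g (p + τ • d)) := by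
  refine ⟨convex_univ, fun σ _ τ _ a b ha hb hab => ?_⟩
  have h1 : a • (p + σ • d) + b • (p + τ • d) = (a + b) • p + (a * σ + b * τ) • d := by
    module
  have h2 : p + (a • σ + b • τ) • d = a • (p + σ • d) + b • (p + τ • d) := by
    rw [h1, hab, one_smul]; simp [smul_eq_mul]
  simp only [smul_eq_mul] at h2 ⊢
  rw [h2]
  exact hg.2 (Set.mem_univ _) (Set.mem_univ _) ha hb hab

lemma line_hasDerivAt (p d : E) (τ₀ : ℝ) :
    HasDerivAt (fun τ : ℝ => p + τ • d) d τ₀ := by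
  simpa using ((hasDerivAt_id τ₀).smul_const d).const_add p

lemma f_line_hasDerivAt {f : E → ℝ} (hdf : Differentiable ℝ f) (p d : E) (τ₀ : ℝ) :
    HasDerivAt (fun τ : ℝ => f (p + τ • d)) ⟪gradient f (p + τ₀ • d), d⟫ τ₀ := by
  have hF : HasFDerivAt f ((InnerProductSpace.toDual ℝ E) (gradient f (p + τ₀ • d)))
      (p + τ₀ • d) := hasGradientAt_iff_hasFDerivAt.mp (hdf _).hasGradientAt
  have := hF.comp_hasDerivAt τ₀ (line_hasDerivAt p d τ₀)
  rw [InnerProductSpace.toDual_apply_apply] at this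
  exact this

lemma sq_line_hasDerivAt (p d : E) (τ₀ : ℝ) :
    HasDerivAt (fun τ : ℝ => ‖p + τ • d‖ ^ 2) (2 * ⟪p + τ₀ • d, d⟫) τ₀ := by
  have h := (line_hasDerivAt p d τ₀).inner ℝ (line_hasDerivAt p d τ₀)
  simp only [real_inner_self_eq_norm_sq] at h
  convert h using 1
  · rfl
  · rfl
  rw [real_inner_comm]; ring

lemma young (p q : E) {c : ℝ} (hc : 0 < c) :
    2 * ⟪p, q⟫ ≤ c * ‖p‖ ^ 2 + (1 / c) * ‖q‖ ^ 2 := by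
  have h2 : (0:ℝ) ≤ ‖c • p - q‖ ^ 2 := by positivity
  have h3 : ‖c • p - q‖ ^ 2 = c ^ 2 * ‖p‖ ^ 2 - 2 * (c * ⟪p, q⟫) + ‖q‖ ^ 2 := by
    rw [norm_sub_sq_real, real_inner_smul_left, norm_smul]
    simp [abs_of_pos hc]; ring
  rw [h3] at h2
  rw [← mul_le_mul_iff_right₀ hc]
  have h4 : c * (c * ‖p‖ ^ 2 + 1 / c * ‖q‖ ^ 2) = c ^ 2 * ‖p‖ ^ 2 + ‖q‖ ^ 2 := by
    field_simp
  rw [h4]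
  linarith

lemma strong_lower {f : E → ℝ} {μ : ℝ} (hdf : Differentiable ℝ f)
    (hsc : ConvexOn ℝ Set.univ (fun z => f z - μ / 2 * ‖z‖ ^ 2)) (p q : E) :
    f p + ⟪gradient f p, q - p⟫ + μ / 2 * ‖q - p‖ ^ 2 ≤ f q := by
  set d := q - p with hd
  have hφc : ConvexOn ℝ Set.univ (fun τ : ℝ => f (p + τ • d) - μ / 2 * ‖p + τ • d‖ ^ 2) :=
    line_convex hsc p d
  have hder : HasDerivAt (fun τ : ℝ => f (p + τ • d) - μ / 2 * ‖p + τ • d‖ ^ 2)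
      (⟪gradient f (p + (0:ℝ) • d), d⟫ - μ / 2 * (2 * ⟪p + (0:ℝ) • d, d⟫)) 0 :=
    (f_line_hasDerivAt hdf p d 0).sub ((sq_line_hasDerivAt p d 0).const_mul (μ / 2))
  simp only [zero_smul, add_zero] at hder
  have hsl := slope1 hφc hder
  simp only [one_smul, zero_smul, add_zero] at hsl
  have hpd : p + d = q := by rw [hd]; abel
  rw [hpd] at hsl
  have e1 : ‖d‖ ^ 2 = ‖q‖ ^ 2 - 2 * ⟪p, q⟫ + ‖p‖ ^ 2 := by
    rw [hd, norm_sub_sq_real, real_inner_comm]; try ring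
  have e2 : ⟪p, d⟫ = ⟪p, q⟫ - ‖p‖ ^ 2 := by
    rw [hd, inner_sub_right, real_inner_self_eq_norm_sq]
  have he1 : μ / 2 * ‖d‖ ^ 2 = μ / 2 * ‖q‖ ^ 2 - μ * ⟪p, q⟫ + μ / 2 * ‖p‖ ^ 2 := by
    rw [e1]; ring
  have he2 : μ / 2 * (2 * ⟪p, d⟫) = μ * ⟪p, q⟫ - μ * ‖p‖ ^ 2 := by rw [e2]; ring
  linarith

lemma lipschitz_upper {f : E → ℝ} {L : ℝ} (hdf : Differentiable ℝ f) (hL : 0 ≤ L)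
    (hlip : LipschitzWith (Real.toNNReal L) (fun z => gradient f z)) (p q : E) :
    f q ≤ f p + ⟪gradient f p, q - p⟫ + L / 2 * ‖q - p‖ ^ 2 := by
  set d := q - p with hd
  set φ : ℝ → ℝ := fun τ => L / 2 * ‖p + τ • d‖ ^ 2 - f (p + τ • d) with hφ
  set φ' : ℝ → ℝ := fun τ => L / 2 * (2 * ⟪p + τ • d, d⟫) - ⟪gradient f (p + τ • d), d⟫ with hφ'
  have hder : ∀ τ, HasDerivAt φ (φ' τ) τ := fun τ =>
    ((sq_line_hasDerivAt p d τ).const_mul (L / 2)).sub (f_line_hasDerivAt hdf p d τ)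
  have hmono : Monotone φ' := by
    intro τ₁ τ₂ h12
    have h3 : (p + τ₂ • d) - (p + τ₁ • d) = (τ₂ - τ₁) • d := by module
    have key : ⟪gradient f (p + τ₂ • d) - gradient f (p + τ₁ • d), d⟫ ≤
        L * (τ₂ - τ₁) * ‖d‖ ^ 2 := by
      have h1 := real_inner_le_norm (gradient f (p + τ₂ • d) - gradient f (p + τ₁ • d)) d
      have h2 : ‖gradient f (p + τ₂ • d) - gradient f (p + τ₁ • d)‖ ≤
          L * ((τ₂ - τ₁) * ‖d‖) := by
        have hh := hlip.dist_le_mul (p + τ₂ • d) (p + τ₁ • d)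
        rw [dist_eq_norm, dist_eq_norm, h3, norm_smul, Real.coe_toNNReal L hL,
          Real.norm_eq_abs, abs_of_nonneg (by linarith : (0:ℝ) ≤ τ₂ - τ₁)] at hh
        exact hh
      nlinarith [norm_nonneg d, norm_nonneg (gradient f (p + τ₂ • d) - gradient f (p + τ₁ • d))]
    have hi : ⟪p + τ₂ • d, d⟫ - ⟪p + τ₁ • d, d⟫ = (τ₂ - τ₁) * ‖d‖ ^ 2 := by
      rw [← inner_sub_left, h3, real_inner_smul_left, real_inner_self_eq_norm_sq]
    have hg : ⟪gradient f (p + τ₂ • d), d⟫ - ⟪gradient f (p + τ₁ • d), d⟫ =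
        ⟪gradient f (p + τ₂ • d) - gradient f (p + τ₁ • d), d⟫ := (inner_sub_left _ _ _).symm
    simp only [hφ']
    nlinarith [key, hi, hg]
  have hφdiff : Differentiable ℝ φ := fun τ => (hder τ).differentiableAt
  have hderiv_eq : deriv φ = φ' := funext fun τ => (hder τ).deriv
  have hφconv : ConvexOn ℝ Set.univ φ :=
    Monotone.convexOn_univ_of_deriv hφdiff (hderiv_eq ▸ hmono)
  have hder0 := hder 0
  have hsl := slope1 hφconv hder0
  simp only [hφ, hφ', one_smul, zero_smul, add_zero] at hsl
  have hpd : p + d = q := by rw [hd]; abel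
  rw [hpd] at hsl
  have e1 : ‖d‖ ^ 2 = ‖q‖ ^ 2 - 2 * ⟪p, q⟫ + ‖p‖ ^ 2 := by
    rw [hd, norm_sub_sq_real, real_inner_comm]; try ring
  have e2 : ⟪p, d⟫ = ⟪p, q⟫ - ‖p‖ ^ 2 := by
    rw [hd, inner_sub_right, real_inner_self_eq_norm_sq]
  have he1 : L / 2 * ‖d‖ ^ 2 = L / 2 * ‖q‖ ^ 2 - L * ⟪p, q⟫ + L / 2 * ‖p‖ ^ 2 := by
    rw [e1]; ring
  have he2 : L / 2 * (2 * ⟪p, d⟫) = L * ⟪p, q⟫ - L * ‖p‖ ^ 2 := by rw [e2]; ring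
  linarith

set_option maxHeartbeats 1000000 in
theorem lyapunov_upper_bounds {n : ℕ}
    (f : EuclideanSpace ℝ (Fin n) → ℝ) (μ L s : ℝ)
    (hμ : 0 < μ) (hμL : μ < L)
    (hf : ContDiff ℝ 1 f)
    (hsc : ConvexOn ℝ Set.univ (fun z => f z - μ / 2 * ‖z‖ ^ 2))
    (hlip : LipschitzWith (Real.toNNReal L) (fun z => gradient f z))
    (xs : EuclideanSpace ℝ (Fin n)) (hmin : ∀ z, f xs ≤ f z)
    (huniq : ∀ z, f z = f xs → z = xs)
    (t : ℕ → ℝ) (ht1 : t 1 = 1) (htmono : ∀ k, 1 ≤ k → t k < t (k + 1))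
    (htlim : Tendsto t atTop atTop)
    (htrec : ∀ k, 1 ≤ k → t (k + 1) ^ 2 - t (k + 1) ≤ t k ^ 2)
    (x y : ℕ → EuclideanSpace ℝ (Fin n))
    (hxy0 : x 0 = y 0)
    (hx : ∀ k, x (k + 1) = y k - s • gradient f (y k))
    (hy : ∀ k, y (k + 1) = x (k + 1) + ((t (k + 1) - 1) / t (k + 2)) • (x (k + 1) - x k))
    (hs0 : 0 < s) (hs1 : s < 1 / L)
    (En : ℕ → ℝ)
    (hE : ∀ k, En k = s * (t (k + 1) - 1) * t (k + 1) * (f (x k) - f xs) +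
      1 / 2 * ‖(t (k + 1) - 1) • (y k - x k) + (y k - xs)‖ ^ 2)
    :
    ∀ k,
      (∀ a b : ℝ, 0 < a → 0 < b →
        En k ≤ s * (t (k + 1) - 1) * t (k + 1) * (1 + μ / a) / (2 * μ) *
            ‖gradient f (y k)‖ ^ 2 +
          (1 + 1 / b) / 2 * ‖y k - xs‖ ^ 2 +
          ((1 + b) * (t (k + 1) - 1) ^ 2 + s * (t (k + 1) - 1) * t (k + 1) * (a + L)) / 2 *
            ‖y k - x k‖ ^ 2) ∧
      (∀ u v w : ℝ, 0 < u → 0 < v → 0 < w →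
        En (k + 1) ≤ ((t (k + 2) - 1) * t (k + 2) * (1 / (2 * μ * s) - 1 + L * s / 2) +
            (1 + u + 1 / v) * t (k + 1) ^ 2 / 2) * ‖s • gradient f (y k)‖ ^ 2 +
          (1 + v + w) * (t (k + 1) - 1) ^ 2 / 2 * ‖y k - x k‖ ^ 2 +
          (1 + 1 / w + 1 / u) / 2 * ‖y k - xs‖ ^ 2) := by
  have hdf : Differentiable ℝ f := hf.differentiable one_ne_zero
  have hL0 : (0:ℝ) ≤ L := by linarith
  have hPL : ∀ p, f p - f xs ≤ 1 / (2 * μ) * ‖gradient f p‖ ^ 2 := by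
    intro p
    have h1 := strong_lower hdf hsc p xs
    have h2 := young (gradient f p) (p - xs) (c := 1 / μ) (by positivity)
    rw [one_div_one_div] at h2
    have h4 : ⟪gradient f p, xs - p⟫ = -⟪gradient f p, p - xs⟫ := by
      rw [← inner_neg_right]; congr 1; abel
    have h5 : ‖xs - p‖ = ‖p - xs‖ := norm_sub_rev _ _
    rw [h4, h5] at h1
    have hq : 1 / (2 * μ) * ‖gradient f p‖ ^ 2 = 1 / μ * ‖gradient f p‖ ^ 2 / 2 := by
      ring
    linarith
  have hts : ∀ k, 1 ≤ t (k + 1) := by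
    intro k
    induction k with
    | zero => simp [ht1]
    | succ m ih => exact le_of_lt (lt_of_le_of_lt ih (htmono (m + 1) (by omega)))
  intro k
  constructor
  · intro a b ha hb
    have htk := hts k
    set g := gradient f (y k) with hg
    have hfx : f (x k) - f xs ≤
        (1 / (2 * μ) + 1 / (2 * a)) * ‖g‖ ^ 2 + (L + a) / 2 * ‖y k - x k‖ ^ 2 := by
      have h1 := lipschitz_upper hdf hL0 hlip (y k) (x k)
      have h2 := hPL (y k)
      have h3 := young g (x k - y k) (c := 1 / a) (by positivity)
      rw [one_div_one_div] at h3
      have h5 : ‖x k - y k‖ = ‖y k - x k‖ := norm_sub_rev _ _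
      rw [h5] at h1 h3
      have hq1 : 1 / (2 * μ) * ‖g‖ ^ 2 = 1 / μ * ‖g‖ ^ 2 / 2 := by ring
      have hq2 : 1 / (2 * a) * ‖g‖ ^ 2 = 1 / a * ‖g‖ ^ 2 / 2 := by ring
      linarith
    have hnorm : ‖(t (k + 1) - 1) • (y k - x k) + (y k - xs)‖ ^ 2 ≤
        (1 + b) * (t (k + 1) - 1) ^ 2 * ‖y k - x k‖ ^ 2 + (1 + 1 / b) * ‖y k - xs‖ ^ 2 := by
      have h1 := norm_add_sq_real ((t (k + 1) - 1) • (y k - x k)) (y k - xs)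
      have h2 := young ((t (k + 1) - 1) • (y k - x k)) (y k - xs) hb
      have h3 : ‖(t (k + 1) - 1) • (y k - x k)‖ ^ 2 = (t (k + 1) - 1) ^ 2 * ‖y k - x k‖ ^ 2 := by
        rw [norm_smul, mul_pow, Real.norm_eq_abs, sq_abs]
      rw [h3] at h1 h2
      linarith
    have hM : 0 ≤ s * (t (k + 1) - 1) * t (k + 1) :=
      mul_nonneg (mul_nonneg hs0.le (by linarith)) (by linarith)
    have hcomb := mul_le_mul_of_nonneg_left hfx hM
    rw [hE k]
    have key1 : s * (t (k + 1) - 1) * t (k + 1) * (1 + μ / a) / (2 * μ) =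
        s * (t (k + 1) - 1) * t (k + 1) * (1 / (2 * μ) + 1 / (2 * a)) := by
      field_simp
    rw [key1]
    nlinarith [hcomb, hnorm]
  · intro u v w hu hv hw
    have ht1k := hts k
    have ht2k := hts (k + 1)
    set g := gradient f (y k) with hg
    have hsg : ‖s • g‖ ^ 2 = s ^ 2 * ‖g‖ ^ 2 := by
      rw [norm_smul, mul_pow, Real.norm_eq_abs, sq_abs]
    have ht2ne : t (k + 2) ≠ 0 := by
      intro h; rw [h] at ht2k; linarith
    have hV : (t (k + 2) - 1) • (y (k + 1) - x (k + 1)) + (y (k + 1) - xs)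
        = ((t (k + 1) - 1) • (y k - x k) + (y k - xs)) - (t (k + 1) * s) • g := by
      rw [hy k, hx k]
      match_scalars <;> field_simp <;> ring
    have hfx1 : f (x (k + 1)) - f xs ≤ (1 / (2 * μ) - s + L * s ^ 2 / 2) * ‖g‖ ^ 2 := by
      have h1 := lipschitz_upper hdf hL0 hlip (y k) (x (k + 1))
      have h2 := hPL (y k)
      have h3 : x (k + 1) - y k = -(s • g) := by rw [hx k]; abel
      rw [h3, inner_neg_right, real_inner_smul_right, real_inner_self_eq_norm_sq,
        norm_neg, hsg] at h1
      have hq : 1 / (2 * μ) * ‖g‖ ^ 2 = 1 / μ * ‖g‖ ^ 2 / 2 := by ring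
      linarith [h1, h2, hq]
    have hAn : ‖(t (k + 1) - 1) • (y k - x k)‖ ^ 2 =
        (t (k + 1) - 1) ^ 2 * ‖y k - x k‖ ^ 2 := by
      rw [norm_smul, mul_pow, Real.norm_eq_abs, sq_abs]
    have hCn : ‖(t (k + 1) * s) • g‖ ^ 2 = t (k + 1) ^ 2 * (s ^ 2 * ‖g‖ ^ 2) := by
      rw [norm_smul, mul_pow, Real.norm_eq_abs, abs_mul, mul_pow, sq_abs, sq_abs]
      ring
    have hexp : ‖((t (k + 1) - 1) • (y k - x k) + (y k - xs)) - (t (k + 1) * s) • g‖ ^ 2 =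
        ‖(t (k + 1) - 1) • (y k - x k)‖ ^ 2 + ‖y k - xs‖ ^ 2 + ‖(t (k + 1) * s) • g‖ ^ 2
        + 2 * ⟪(t (k + 1) - 1) • (y k - x k), (y k - xs)⟫
        - 2 * ⟪(t (k + 1) - 1) • (y k - x k), (t (k + 1) * s) • g⟫
        - 2 * ⟪(y k - xs), (t (k + 1) * s) • g⟫ := by
      rw [norm_sub_sq_real, norm_add_sq_real, inner_add_left]
      ring
    have hy1 := young ((t (k + 1) - 1) • (y k - x k)) (y k - xs) hw
    have hy2 : -(2 * ⟪(t (k + 1) - 1) • (y k - x k), (t (k + 1) * s) • g⟫) ≤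
        v * ‖(t (k + 1) - 1) • (y k - x k)‖ ^ 2 + (1 / v) * ‖(t (k + 1) * s) • g‖ ^ 2 := by
      have := young ((t (k + 1) - 1) • (y k - x k)) (-((t (k + 1) * s) • g)) hv
      rw [inner_neg_right, norm_neg] at this
      linarith
    have hy3 : -(2 * ⟪(y k - xs), (t (k + 1) * s) • g⟫) ≤
        u * ‖(t (k + 1) * s) • g‖ ^ 2 + (1 / u) * ‖y k - xs‖ ^ 2 := by
      have := young ((t (k + 1) * s) • g) (-(y k - xs)) hu
      rw [inner_neg_right, norm_neg, real_inner_comm] at this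
      linarith
    have hM : 0 ≤ s * (t (k + 2) - 1) * t (k + 2) :=
      mul_nonneg (mul_nonneg hs0.le (by linarith)) (by linarith)
    have hcomb := mul_le_mul_of_nonneg_left hfx1 hM
    rw [hE (k + 1), hV, hsg]
    simp only [show k + 1 + 1 = k + 2 from rfl]
    have egoal : ((t (k + 2) - 1) * t (k + 2) * (1 / (2 * μ * s) - 1 + L * s / 2) +
          (1 + u + 1 / v) * t (k + 1) ^ 2 / 2) * (s ^ 2 * ‖g‖ ^ 2) =
        s * (t (k + 2) - 1) * t (k + 2) * ((1 / (2 * μ) - s + L * s ^ 2 / 2) * ‖g‖ ^ 2) +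
          (1 + u + 1 / v) / 2 * (t (k + 1) ^ 2 * (s ^ 2 * ‖g‖ ^ 2)) := by
      have e0 : (1 / (2 * μ * s) : ℝ) * s ^ 2 = 1 / (2 * μ) * s := by
        field_simp
      linear_combination ((t (k + 2) - 1) * t (k + 2) * ‖g‖ ^ 2) * e0
    rw [egoal]
    rw [hAn] at hexp hy1 hy2
    rw [hCn] at hexp hy2 hy3
    linarith [hcomb, hexp, hy1, hy2, hy3]
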